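/- arXiv:2301.01742 — 5 statements merged into one kernel-verified Lean document; each statement's English description precedes it below -/
import Mathlib

section
/- Let w, o be real numbers, L and R disjoint finite index sets with |L| ≥ 1, and for each d ∈ L ∪ R real numbers i_d, i*_d with |i_d - o| ≤ |i*_d - o|. Suppose additionally that |i_d - w| ≤ |i*_d - o| for every d ∈ L, and |i*_d - o| ≥ |w - o|/2 for every d ∈ L. Then (1/(|L|+|R|)) Σ_{d ∈ L∪R} |i_d - w| ≤ (1 + 2|R|/|L|) · (1/(|L|+|R|)) Σ_{d ∈ L∪R} |i*_d - o|. -/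
theorem stmt_8 {ι : Type*} [DecidableEq ι] (L R : Finset ι) (hdisj : Disjoint L R)
    (hL : 1 ≤ L.card) (w o : ℝ) (i istar : ι → ℝ)
    (h1 : ∀ d ∈ L ∪ R, |i d - o| ≤ |istar d - o|)
    (h2 : ∀ d ∈ L, |i d - w| ≤ |istar d - o|)
    (h3 : ∀ d ∈ L, |w - o| / 2 ≤ |istar d - o|) :
    (1 / (L.card + R.card) : ℝ) * ∑ d ∈ L ∪ R, |i d - w| ≤
      (1 + 2 * R.card / L.card) *
        ((1 / (L.card + R.card) : ℝ) * ∑ d ∈ L ∪ R, |istar d - o|) := by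
  have hLpos : (0:ℝ) < L.card := by exact_mod_cast hL
  have hnpos : (0:ℝ) < (L.card + R.card : ℝ) := by positivity
  set SL := ∑ d ∈ L, |istar d - o| with hSL
  set SR := ∑ d ∈ R, |istar d - o| with hSR
  have hSRnn : 0 ≤ SR := Finset.sum_nonneg fun d _ => abs_nonneg _
  have hsplit : ∑ d ∈ L ∪ R, |istar d - o| = SL + SR := Finset.sum_union hdisj
  have hsplit2 : ∑ d ∈ L ∪ R, |i d - w| =
      (∑ d ∈ L, |i d - w|) + ∑ d ∈ R, |i d - w| := Finset.sum_union hdisj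
  have hLsum : ∑ d ∈ L, |i d - w| ≤ SL := Finset.sum_le_sum h2
  have hRsum : ∑ d ∈ R, |i d - w| ≤ SR + R.card * |w - o| := by
    have : ∑ d ∈ R, |i d - w| ≤ ∑ d ∈ R, (|istar d - o| + |w - o|) := by
      refine Finset.sum_le_sum fun d hd => ?_
      have h1d := h1 d (Finset.mem_union_right _ hd)
      have htri : |i d - w| ≤ |i d - o| + |w - o| := by
        have h := abs_add_le (i d - o) (o - w)
        rw [show i d - o + (o - w) = i d - w by ring, abs_sub_comm o w] at h
        exact h
      linarith
    simpa [Finset.sum_add_distrib, mul_comm] using this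
  have hSLlb : (L.card : ℝ) * (|w - o| / 2) ≤ SL := by
    have := Finset.sum_le_sum h3 (s := L)
    simpa [Finset.sum_const, nsmul_eq_mul] using this
  have hkey : ∑ d ∈ L ∪ R, |i d - w| ≤
      (1 + 2 * R.card / L.card) * ∑ d ∈ L ∪ R, |istar d - o| := by
    rw [hsplit, hsplit2]
    have hRnn : (0:ℝ) ≤ R.card := Nat.cast_nonneg _
    have h4 : (R.card : ℝ) * |w - o| ≤ 2 * R.card / L.card * SL := by
      rw [div_mul_eq_mul_div, le_div_iff₀ hLpos]
      nlinarith [abs_nonneg (w - o)]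
    have h5 : 2 * R.card / L.card * SL ≤ 2 * R.card / L.card * (SL + SR) := by
      apply mul_le_mul_of_nonneg_left (by linarith) (by positivity)
    nlinarith
  calc (1 / (L.card + R.card) : ℝ) * ∑ d ∈ L ∪ R, |i d - w|
      ≤ (1 / (L.card + R.card) : ℝ) *
        ((1 + 2 * R.card / L.card) * ∑ d ∈ L ∪ R, |istar d - o|) :=
        mul_le_mul_of_nonneg_left hkey (by positivity)
    _ = (1 + 2 * R.card / L.card) *
        ((1 / (L.card + R.card) : ℝ) * ∑ d ∈ L ∪ R, |istar d - o|) := by ring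
end

section
/- Let N be a nonempty finite set of real numbers partitioned into L and R with |L| ≥ 1, and w < o reals. Suppose every i ∈ L satisfies |i - w| ≤ |i - o| (and hence |i - o| ≥ |w - o|/2). Then (1/|N|) Σ_{i∈N} |i - w| ≤ (1 + 2|R|/|L|) · (1/|N|) Σ_{i∈N} |i - o|. -/
/-!
Split the sum into the agents of `L` and of `R`. On `L` the cost of `w` is at most that of `o`.
On `R` the triangle inequality gives `d(i, w) ≤ d(i, o) + d(w, o)`, so `R` costs at most
`|R| · d(w, o)` extra. That extra is paid for by `L`: every agent of `L` is closer to `w` than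
to `o`, so its distance to `o` is at least `d(w, o) / 2`, and the agents of `L` together pay
`|L| · d(w, o) / 2` toward `o`.
-/

open Finset

section PseudoMetric

variable {α : Type*} [PseudoMetricSpace α]

lemma dist_le_two_mul_dist_of_dist_le {i w o : α} (h : dist i w ≤ dist i o) :
    dist w o ≤ 2 * dist i o := by
  linarith [dist_triangle_left w o i]

variable [DecidableEq α]

lemma card_mul_sum_dist_le_of_disjoint {L R : Finset α} (hdisj : Disjoint L R) {w o : α}
    (hpref : ∀ i ∈ L, dist i w ≤ dist i o) :
    #L * ∑ i ∈ L ∪ R, dist i w ≤ (#L + 2 * #R) * ∑ i ∈ L ∪ R, dist i o := by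
  rw [sum_union hdisj, sum_union hdisj]
  have hL : ∑ i ∈ L, dist i w ≤ ∑ i ∈ L, dist i o := sum_le_sum hpref
  have hR : ∑ i ∈ R, dist i w ≤ ∑ i ∈ R, dist i o + #R * dist w o := by
    rw [← nsmul_eq_mul, ← sum_const, ← sum_add_distrib]
    exact sum_le_sum fun i _ => dist_triangle_right i w o
  have hL_far : #L * dist w o ≤ 2 * ∑ i ∈ L, dist i o := by
    rw [← nsmul_eq_mul, ← sum_const, mul_sum]
    exact sum_le_sum fun i hi => dist_le_two_mul_dist_of_dist_le (hpref i hi)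
  have hR_nonneg : 0 ≤ ∑ i ∈ R, dist i o := sum_nonneg fun i _ => dist_nonneg
  have hcard : (0 : ℝ) ≤ #L := Nat.cast_nonneg _
  nlinarith [mul_le_mul_of_nonneg_left hL hcard, mul_le_mul_of_nonneg_left hR hcard]

lemma card_mul_sum_dist_le {L R : Finset α} {w o : α} (hpref : ∀ i ∈ L, dist i w ≤ dist i o) :
    #L * ∑ i ∈ L ∪ R, dist i w ≤ (#L + 2 * #R) * ∑ i ∈ L ∪ R, dist i o := by
  have key := card_mul_sum_dist_le_of_disjoint (R := R \ L) disjoint_sdiff hpref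
  rw [union_sdiff_self_eq_union] at key
  have hcard : (#(R \ L) : ℝ) ≤ #R := by exact_mod_cast card_le_card sdiff_subset
  have hsum : 0 ≤ ∑ i ∈ L ∪ R, dist i o := sum_nonneg fun i _ => dist_nonneg
  nlinarith

end PseudoMetric

theorem stmt_10_general (L R : Finset ℝ) (hL : 1 ≤ L.card)
    (w o : ℝ)
    (hpref : ∀ i ∈ L, |i - w| ≤ |i - o|) :
    (1 / ((L ∪ R).card) : ℝ) * ∑ i ∈ L ∪ R, |i - w| ≤
      (1 + 2 * R.card / L.card) *
        ((1 / ((L ∪ R).card) : ℝ) * ∑ i ∈ L ∪ R, |i - o|) := by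
  simp only [← Real.dist_eq] at hpref ⊢
  have hLpos : (0 : ℝ) < L.card := by exact_mod_cast hL
  have hsum : ∑ i ∈ L ∪ R, dist i w ≤ (1 + 2 * R.card / L.card) * ∑ i ∈ L ∪ R, dist i o := by
    rw [one_add_div hLpos.ne', div_mul_eq_mul_div, le_div_iff₀ hLpos, mul_comm]
    exact card_mul_sum_dist_le hpref
  rw [mul_left_comm]
  gcongr

theorem stmt_10 (L R : Finset ℝ) (hdisj : Disjoint L R) (hL : 1 ≤ L.card)
    (w o : ℝ) (hwo : w < o)
    (hpref : ∀ i ∈ L, |i - w| ≤ |i - o|) :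
    (1 / ((L ∪ R).card) : ℝ) * ∑ i ∈ L ∪ R, |i - w| ≤
      (1 + 2 * R.card / L.card) *
        ((1 / ((L ∪ R).card) : ℝ) * ∑ i ∈ L ∪ R, |i - o|) :=
  stmt_10_general L R hL w o hpref
end

section
/- Consider instances on the real line: a finite set A of alternatives, k ≥ 1 districts, each district d being a nonempty finite multiset N_d of agent positions. Fix α = (3-√5)/2. Define the mechanism: for each district d, let y_d ∈ A be an alternative minimizing distance to the rightmost agent of d; let w be the ⌈α·k⌉-th leftmost among the representatives y_d (counted with multiplicity). Then for every alternative o ∈ A, (1/k) Σ_d max_{i∈N_d} |i - w| ≤ (2+√5) · (1/k) Σ_d max_{i∈N_d} |i - o|. -/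
/-!
Let `S` be the districts whose representative lies left of the winner `w` and `T` those whose
representative lies right of it; since `w` is the `⌈αk⌉`-th order statistic, `|S| ≥ αk` and
`|T| ≥ (1 - α)k`. As `y_d` is at most as far from the rightmost agent of `d` as `o` is,
`|y_d - o| ≤ 2 cost_d(o)`, and no agent of `d` lies more than `cost_d(o)` to the right of `y_d`.
If `w ≤ o`, a district in `S` costs no more at `w` than at `o`, any other at most `|o - w|` more,
and `|S| · |o - w| ≤ 2 cost(o)`. If `o < w`, every district costs at most `|o - w|` more, and
`|T| · |o - w| ≤ 2 cost(o)`. With `α = ψ² = 1/φ²` both cases give the ratio `1 + 2φ = 2 + √5`.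
-/

open Finset Real goldenRatio

namespace List

variable {β : Type*} [LinearOrder β] {l : List β} {j : ℕ} {w : β}

theorem succ_le_countP_le_of_pairwise (hl : l.Pairwise (· ≤ ·)) (hw : l[j]? = some w) :
    j + 1 ≤ l.countP (fun x => decide (x ≤ w)) := by
  obtain ⟨hj, rfl⟩ := getElem?_eq_some_iff.mp hw
  calc j + 1 = (l.take (j + 1)).countP (fun x => decide (x ≤ l[j])) := by
        rw [countP_eq_length.mpr, length_take]
        · omega
        intro x hx
        obtain ⟨i, hi, rfl⟩ := getElem_of_mem hx
        simp only [getElem_take, decide_eq_true_eq]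
        exact hl.rel_get_of_le (a := ⟨i, by grind⟩) (b := ⟨j, hj⟩) (by grind)
    _ ≤ _ := (take_sublist _ _).countP_le

theorem length_le_add_countP_ge_of_pairwise (hl : l.Pairwise (· ≤ ·)) (hw : l[j]? = some w) :
    l.length ≤ j + l.countP (fun x => decide (w ≤ x)) := by
  obtain ⟨hj, rfl⟩ := getElem?_eq_some_iff.mp hw
  have hdrop : (l.drop j).countP (fun x => decide (l[j] ≤ x)) = l.length - j := by
    rw [countP_eq_length.mpr, length_drop]
    intro x hx
    obtain ⟨i, hi, rfl⟩ := getElem_of_mem hx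
    simp only [getElem_drop, decide_eq_true_eq]
    exact hl.rel_get_of_le (a := ⟨j, hj⟩) (b := ⟨j + i, by grind⟩) (by grind)
  have := (drop_sublist j l).countP_le (p := fun x => decide (l[j] ≤ x))
  omega

end List

namespace Finset

variable {ι β : Type*} [LinearOrder β] {s : Finset ι} {y : ι → β} {j : ℕ} {w : β}

theorem card_filter_eq_countP_sort (s : Finset ι) (y : ι → β) (q : β → Prop) [DecidablePred q] :
    #{d ∈ s | q (y d)} = ((s.val.map y).sort (· ≤ ·)).countP (fun x => decide (q x)) := by
  rw [← Multiset.coe_countP, Multiset.sort_eq, Multiset.countP_map]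
  rfl

theorem succ_le_card_filter_le_of_sort_getElem?
    (hw : ((s.val.map y).sort (· ≤ ·))[j]? = some w) : j + 1 ≤ #{d ∈ s | y d ≤ w} := by
  rw [card_filter_eq_countP_sort s y (· ≤ w)]
  exact List.succ_le_countP_le_of_pairwise (Multiset.pairwise_sort _ _) hw

theorem card_le_add_card_filter_ge_of_sort_getElem?
    (hw : ((s.val.map y).sort (· ≤ ·))[j]? = some w) : #s ≤ j + #{d ∈ s | w ≤ y d} := by
  have := List.length_le_add_countP_ge_of_pairwise (Multiset.pairwise_sort _ _) hw
  rwa [Multiset.length_sort, Multiset.card_map, ← card_filter_eq_countP_sort s y (w ≤ ·)] at this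

variable {r : ℝ}

theorem mul_card_le_card_filter_le_of_sort_getElem_ceil
    (hw : ((s.val.map y).sort (· ≤ ·))[⌈r * #s⌉₊ - 1]? = some w) :
    r * #s ≤ #{d ∈ s | y d ≤ w} :=
  (Nat.le_ceil _).trans <| by
    exact_mod_cast (show _ ≤ ⌈r * #s⌉₊ - 1 + 1 by omega).trans
      (succ_le_card_filter_le_of_sort_getElem? hw)

theorem card_sub_mul_card_le_card_filter_ge_of_sort_getElem_ceil (hr : 0 ≤ r)
    (hw : ((s.val.map y).sort (· ≤ ·))[⌈r * #s⌉₊ - 1]? = some w) :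
    #s - r * #s ≤ #{d ∈ s | w ≤ y d} := by
  have hcard : (#s : ℝ) ≤ (⌈r * #s⌉₊ - 1 : ℕ) + #{d ∈ s | w ≤ y d} := by
    exact_mod_cast card_le_add_card_filter_ge_of_sort_getElem? hw
  have hceil : ((⌈r * #s⌉₊ - 1 : ℕ) : ℝ) ≤ r * #s := by
    rcases (⌈r * #s⌉₊).eq_zero_or_pos with h | h
    · rw [h, zero_tsub, Nat.cast_zero]
      positivity
    · exact (Nat.lt_ceil.mp (Nat.sub_lt h one_pos)).le
  linarith

end Finset

section District

variable {ι : Type*} {s : Finset ι} (hs : s.Nonempty) {p : ι → ℝ} {o w y : ℝ}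
include hs

theorem sup'_abs_sub_le_sup'_add_abs_sub :
    s.sup' hs (fun i => |p i - w|) ≤ s.sup' hs (fun i => |p i - o|) + |o - w| :=
  sup'_le _ _ fun _ hi => (abs_sub_le _ o _).trans <|
    add_le_add_left (le_sup' (fun i => |p i - o|) hi) _

theorem abs_sup'_sub_le_sup'_abs_sub : |s.sup' hs p - o| ≤ s.sup' hs (fun i => |p i - o|) := by
  obtain ⟨i, hi, hmax⟩ := exists_mem_eq_sup' hs p
  rw [hmax]
  exact le_sup' (fun i => |p i - o|) hi

theorem abs_sub_le_two_mul_sup'_abs_sub (hy : |s.sup' hs p - y| ≤ |s.sup' hs p - o|) :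
    |y - o| ≤ 2 * s.sup' hs (fun i => |p i - o|) := by
  have hc := abs_sup'_sub_le_sup'_abs_sub hs (p := p) (o := o)
  linarith [abs_sub_le y (s.sup' hs p) o, abs_sub_comm y (s.sup' hs p)]

theorem sup'_abs_sub_le_sup'_abs_sub_of_le_of_le (hy : |s.sup' hs p - y| ≤ |s.sup' hs p - o|)
    (hyw : y ≤ w) (hwo : w ≤ o) :
    s.sup' hs (fun i => |p i - w|) ≤ s.sup' hs (fun i => |p i - o|) := by
  refine sup'_le _ _ fun i hi => abs_sub_le_iff.mpr ⟨?_, ?_⟩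
  · have hc := abs_sup'_sub_le_sup'_abs_sub hs (p := p) (o := o)
    linarith [le_sup' p hi, le_abs_self (s.sup' hs p - y)]
  · have hc : |p i - o| ≤ _ := le_sup' (fun i => |p i - o|) hi
    linarith [neg_abs_le (p i - o)]

end District

theorem sum_le_one_add_two_mul_sum_of_card_compl_le {ι : Type*} [Fintype ι] [DecidableEq ι]
    {M c : ι → ℝ} {S U : Finset ι} {δ r : ℝ} (hc : ∀ d, 0 ≤ c d) (hδ : 0 ≤ δ) (hr : 0 ≤ r)
    (hU : ∀ d ∈ U, M d ≤ c d) (hM : ∀ d, M d ≤ c d + δ) (hS : ∀ d ∈ S, δ ≤ 2 * c d)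
    (hcard : (#Uᶜ : ℝ) ≤ r * #S) :
    ∑ d, M d ≤ (1 + 2 * r) * ∑ d, c d := by
  have hsum : ∑ d, M d ≤ ∑ d, c d + #Uᶜ * δ := by
    rw [← sum_add_sum_compl U M, ← sum_add_sum_compl U c, add_assoc, ← nsmul_eq_mul,
      ← sum_const, ← sum_add_distrib]
    exact add_le_add (sum_le_sum hU) (sum_le_sum fun d _ => hM d)
  have hS_sum : #S * δ ≤ 2 * ∑ d, c d :=
    calc #S * δ ≤ ∑ d ∈ S, 2 * c d := by simpa using card_nsmul_le_sum S _ δ hS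
      _ ≤ ∑ d, 2 * c d := sum_le_univ_sum_of_nonneg fun d => by linarith [hc d]
      _ = 2 * ∑ d, c d := (mul_sum _ _ _).symm
  calc ∑ d, M d ≤ ∑ d, c d + #Uᶜ * δ := hsum
    _ ≤ ∑ d, c d + r * (#S * δ) := by
      rw [← mul_assoc]
      gcongr
    _ ≤ ∑ d, c d + r * (2 * ∑ d, c d) := by gcongr
    _ = (1 + 2 * r) * ∑ d, c d := by ring

theorem goldenConj_sq_eq_three_sub_sqrt_five_div_two : ψ ^ 2 = (3 - √5) / 2 := by
  rw [goldenConj_sq]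
  ring

theorem sub_le_goldenRatio_mul_of_goldenConj_sq_mul_le {K a : ℝ} (h : ψ ^ 2 * K ≤ a) :
    K - a ≤ φ * a := by
  have := mul_le_mul_of_nonneg_left h (sq_nonneg φ)
  rw [← mul_assoc, ← mul_pow, goldenRatio_mul_goldenConj, neg_one_sq, one_mul, goldenRatio_sq]
    at this
  linarith

theorem le_goldenRatio_mul_of_sub_goldenConj_sq_mul_le {K b : ℝ} (h : K - ψ ^ 2 * K ≤ b) :
    K ≤ φ * b := by
  have := mul_le_mul_of_nonneg_left h goldenRatio_pos.le
  have hK : φ * (K - ψ ^ 2 * K) = K := by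
    linear_combination (-K) * goldenRatio_mul_goldenConj - φ * K * goldenConj_sq
  linarith

theorem stmt_11 (k : ℕ) (A : Finset ℝ)
    (n : Fin (k + 1) → ℕ) (p : (d : Fin (k + 1)) → Fin (n d + 1) → ℝ)
    (y : Fin (k + 1) → ℝ)
    (hy : ∀ d, y d ∈ A ∧ ∀ a ∈ A,
      |Finset.univ.sup' Finset.univ_nonempty (p d) - y d| ≤
        |Finset.univ.sup' Finset.univ_nonempty (p d) - a|)
    (α : ℝ) (hα : α = (3 - Real.sqrt 5) / 2)
    (w : ℝ)
    (hw : (Multiset.sort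
        (Multiset.map y (Finset.univ : Finset (Fin (k + 1))).val) (· ≤ ·))[⌈α * (k + 1 : ℕ)⌉₊ - 1]?
      = some w)
    (o : ℝ) (ho : o ∈ A) :
    (1 / (k + 1 : ℕ) : ℝ) *
        ∑ d, Finset.univ.sup' Finset.univ_nonempty (fun i => |p d i - w|) ≤
      (2 + Real.sqrt 5) *
        ((1 / (k + 1 : ℕ) : ℝ) *
          ∑ d, Finset.univ.sup' Finset.univ_nonempty (fun i => |p d i - o|)) := by
  rw [← goldenConj_sq_eq_three_sub_sqrt_five_div_two] at hα
  subst hα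
  replace hw : ((univ.val.map y).sort (· ≤ ·))[⌈ψ ^ 2 * #(univ : Finset (Fin (k + 1)))⌉₊ - 1]?
      = some w := by
    rwa [card_univ, Fintype.card_fin]
  have hS := mul_card_le_card_filter_le_of_sort_getElem_ceil hw
  have hT := card_sub_mul_card_le_card_filter_ge_of_sort_getElem_ceil (sq_nonneg ψ) hw
  set c := fun d => univ.sup' univ_nonempty (fun i => |p d i - o|)
  have hc (d) : 0 ≤ c d := (abs_nonneg _).trans (le_sup' (fun i => |p d i - o|) (mem_univ 0))
  have hM (d) := sup'_abs_sub_le_sup'_add_abs_sub univ_nonempty (p := p d) (o := o) (w := w)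
  have hdist (d) (hmem : w ∈ Set.uIcc o (y d)) : |o - w| ≤ 2 * c d := by
    rw [abs_sub_comm]
    exact (Set.abs_sub_left_of_mem_uIcc hmem).trans
      (abs_sub_le_two_mul_sup'_abs_sub univ_nonempty ((hy d).2 o ho))
  have key : ∑ d, univ.sup' univ_nonempty (fun i => |p d i - w|) ≤ (1 + 2 * φ) * ∑ d, c d := by
    rcases le_total w o with hwo | how
    · refine sum_le_one_add_two_mul_sum_of_card_compl_le (U := {d | y d ≤ w})
        (S := {d | y d ≤ w}) hc (abs_nonneg _) goldenRatio_pos.le (fun d hd => ?_) hM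
        (fun d hd => hdist d (Set.mem_uIcc.mpr (Or.inr ⟨(mem_filter.mp hd).2, hwo⟩))) ?_
      · exact sup'_abs_sub_le_sup'_abs_sub_of_le_of_le univ_nonempty ((hy d).2 o ho)
          (mem_filter.mp hd).2 hwo
      · rw [card_compl, Nat.cast_sub (card_le_univ _), ← card_univ]
        exact sub_le_goldenRatio_mul_of_goldenConj_sq_mul_le hS
    · refine sum_le_one_add_two_mul_sum_of_card_compl_le (U := ∅) (S := {d | w ≤ y d}) hc
        (abs_nonneg _) goldenRatio_pos.le (by simp) hM
        (fun d hd => hdist d (Set.mem_uIcc.mpr (Or.inl ⟨how, (mem_filter.mp hd).2⟩))) ?_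
      rw [compl_empty]
      exact le_goldenRatio_mul_of_sub_goldenConj_sq_mul_le hT
  rw [show 2 + √5 = 1 + 2 * φ by ring, mul_left_comm]
  gcongr
end

section
/- Consider instances on the real line: a finite set A of alternatives and districts d with nonempty finite multisets N_d of agent positions. Fix α = (3-√5)/2. Define the mechanism: for each district d, let y_d ∈ A be an alternative minimizing distance to the ⌈α·n_d⌉-th leftmost agent of N_d (where n_d = |N_d|); let w be the rightmost among the representatives y_d. Then for every alternative o ∈ A, max_d (1/n_d) Σ_{i∈N_d} |i - w| ≤ (2+√5) · max_d (1/n_d) Σ_{i∈N_d} |i - o|. -/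
/-!
Write `x_d` for the `α`-quantile of district `d` and `OPT` for the cost of `o`. At least an
`α` fraction of the agents of `d` lie weakly left of `x_d` and at least a `1 - α` fraction
weakly right, so the average distance to `o` in `d` is at least `α (o - x_d)` when `x_d ≤ o`
and at least `(1 - α) (x_d - o)` when `o ≤ x_d`. Since `o ∈ A`, every representative `y_d` is
at least as close to `x_d` as `o` is.

If `w ≥ o`, the district whose representative is `w` gives
`w - o ≤ 2 (x_d - o) ≤ 2 OPT / (1 - α)`, and moving from `o` to `w` raises every average
distance by at most `w - o`. If `w < o`, then every `x_d` lies left of the midpoint of `w` and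
`o`, so only the agents right of `x_d`, a `1 - α` fraction, pay more at `w`, each at most
`o - w ≤ 2 (o - x_d) ≤ 2 OPT / α`. The distortion is thus at most `1 + c` whenever
`2 ≤ c (1 - α)` and `2 (1 - α) ≤ c α`; the choice `α = (3 - √5) / 2`, the root of
`α = (1 - α)²`, balances the two cases with `c = 1 + √5`.
-/

open Finset

theorem List.Pairwise.succ_le_countP_le_getElem {α : Type*} [Preorder α] [DecidableLE α]
    {l : List α} (hl : l.Pairwise (· ≤ ·)) {j : ℕ} (hj : j < l.length) :
    j + 1 ≤ l.countP (fun a => a ≤ l[j]) := by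
  have hall : ∀ a ∈ l.take (j + 1), a ≤ l[j] := by
    intro a ha
    obtain ⟨i, hi, rfl⟩ := List.mem_iff_getElem.mp ha
    rw [List.getElem_take]
    have hij : i ≤ j := Nat.lt_succ_iff.mp (hi.trans_le (List.length_take_le _ _))
    rcases hij.lt_or_eq with h | h
    · exact List.pairwise_iff_getElem.mp hl i j _ hj h
    · simp [h]
  calc j + 1 = (l.take (j + 1)).countP (fun a => a ≤ l[j]) := by
        rw [List.countP_eq_length.mpr (by simpa using hall)]; simp; omega
    _ ≤ l.countP (fun a => a ≤ l[j]) := (List.take_sublist _ _).countP_le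

theorem List.Pairwise.length_sub_le_countP_getElem_le {α : Type*} [Preorder α] [DecidableLE α]
    {l : List α} (hl : l.Pairwise (· ≤ ·)) {j : ℕ} (hj : j < l.length) :
    l.length - j ≤ l.countP (fun a => l[j] ≤ a) := by
  have hall : ∀ a ∈ l.drop j, l[j] ≤ a := by
    intro a ha
    obtain ⟨i, hi, rfl⟩ := List.mem_iff_getElem.mp ha
    rw [List.getElem_drop]
    rcases Nat.eq_zero_or_pos i with h | h
    · simp [h]
    · exact List.pairwise_iff_getElem.mp hl j (j + i) hj (by simp at hi; omega) (by omega)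
  calc l.length - j = (l.drop j).countP (fun a => l[j] ≤ a) := by
        rw [List.countP_eq_length.mpr (by simpa using hall)]; simp
    _ ≤ l.countP (fun a => l[j] ≤ a) := (List.drop_sublist _ _).countP_le

theorem card_filter_le_and_card_filter_ge_of_sort_getElem? {ι β : Type*} [Fintype ι]
    [LinearOrder β] {f : ι → β} {j : ℕ} {x : β}
    (h : (Multiset.sort (Multiset.map f univ.val) (· ≤ ·))[j]? = some x) :
    j + 1 ≤ #{i | f i ≤ x} ∧ Fintype.card ι - j ≤ #{i | x ≤ f i} := by
  set l := Multiset.sort (Multiset.map f univ.val) (· ≤ ·)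
  have hl : l.Pairwise (· ≤ ·) := Multiset.pairwise_sort _ _
  have hcount (q : β → Prop) [DecidablePred q] : l.countP (fun a => q a) = #{i | q (f i)} := by
    rw [← Multiset.coe_countP, Multiset.sort_eq, Multiset.countP_map]
    rfl
  obtain ⟨hj, rfl⟩ := List.getElem?_eq_some_iff.mp h
  have hlen : l.length = Fintype.card ι := by simp [l]
  have hle := hl.succ_le_countP_le_getElem hj
  have hge := hl.length_sub_le_countP_getElem_le hj
  rw [hcount] at hle hge
  exact ⟨hle, hlen ▸ hge⟩

section Quantile

variable {ι : Type*} [Fintype ι]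

def IsQuantile (α : ℝ) (f : ι → ℝ) (x : ℝ) : Prop :=
  α * Fintype.card ι ≤ #{i | f i ≤ x} ∧ (1 - α) * Fintype.card ι ≤ #{i | x ≤ f i}

theorem isQuantile_of_sort_getElem? {f : ι → ℝ} {α x : ℝ} (hα : 0 ≤ α)
    (h : (Multiset.sort (Multiset.map f univ.val) (· ≤ ·))[⌈α * Fintype.card ι⌉₊ - 1]? =
      some x) :
    IsQuantile α f x := by
  obtain ⟨hle, hge⟩ := card_filter_le_and_card_filter_ge_of_sort_getElem? h
  set m := ⌈α * Fintype.card ι⌉₊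
  have hαN : 0 ≤ α * Fintype.card ι := by positivity
  have hpred : ((m - 1 : ℕ) : ℝ) ≤ α * Fintype.card ι := by
    rcases Nat.eq_zero_or_pos m with hm | hm
    · simp [hm, hαN]
    · exact (Nat.lt_ceil.mp (by omega)).le
  have hmN : m - 1 ≤ Fintype.card ι :=
    le_trans (by omega) (hle.trans (card_filter_le _ _))
  constructor
  · calc α * Fintype.card ι ≤ m := Nat.le_ceil _
      _ ≤ #{i | f i ≤ x} := by exact_mod_cast (by omega : m ≤ #{i | f i ≤ x})
  · calc (1 - α) * Fintype.card ι ≤ (Fintype.card ι : ℝ) - (m - 1 : ℕ) := by linarith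
      _ = ((Fintype.card ι - (m - 1) : ℕ) : ℝ) := by rw [Nat.cast_sub hmN]
      _ ≤ #{i | x ≤ f i} := by exact_mod_cast hge

noncomputable def avgDist (f : ι → ℝ) (z : ℝ) : ℝ := (∑ i, |f i - z|) / Fintype.card ι

theorem avgDist_nonneg (f : ι → ℝ) (z : ℝ) : 0 ≤ avgDist f z := by
  unfold avgDist; positivity

theorem card_mul_le_sum_abs_sub {f : ι → ℝ} (s : Finset ι) {o c : ℝ}
    (h : ∀ i ∈ s, c ≤ |f i - o|) :
    #s * c ≤ ∑ i, |f i - o| := by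
  rw [← nsmul_eq_mul]
  exact (card_nsmul_le_sum s _ c h).trans
    (sum_le_univ_sum_of_nonneg fun i => abs_nonneg _)

variable [Nonempty ι] {f : ι → ℝ}

theorem avgDist_le_add_abs_sub (w o : ℝ) : avgDist f w ≤ avgDist f o + |w - o| := by
  rw [avgDist, avgDist, div_add' _ _ _ (by positivity), div_le_div_iff_of_pos_right (by positivity)]
  calc ∑ i, |f i - w| ≤ ∑ i, (|f i - o| + |w - o|) :=
        sum_le_sum fun i _ => by simpa only [abs_sub_comm w o] using abs_sub_le (f i) o w
    _ = ∑ i, |f i - o| + |w - o| * Fintype.card ι := by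
        rw [sum_add_distrib, sum_const, nsmul_eq_mul, mul_comm, card_univ]

variable {α x o : ℝ}

theorem IsQuantile.mul_sub_le_avgDist (hq : IsQuantile α f x) (hxo : x ≤ o) :
    α * (o - x) ≤ avgDist f o := by
  rw [avgDist, le_div_iff₀ (by positivity)]
  calc α * (o - x) * Fintype.card ι = α * Fintype.card ι * (o - x) := by ring
    _ ≤ #{i | f i ≤ x} * (o - x) := mul_le_mul_of_nonneg_right hq.1 (by linarith)
    _ ≤ ∑ i, |f i - o| := card_mul_le_sum_abs_sub _ fun i hi => by
        rw [abs_sub_comm]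
        exact le_abs.mpr (Or.inl (by linarith [(mem_filter.mp hi).2]))

theorem IsQuantile.one_sub_mul_sub_le_avgDist (hq : IsQuantile α f x) (hox : o ≤ x) :
    (1 - α) * (x - o) ≤ avgDist f o := by
  rw [avgDist, le_div_iff₀ (by positivity)]
  calc (1 - α) * (x - o) * Fintype.card ι = (1 - α) * Fintype.card ι * (x - o) := by ring
    _ ≤ #{i | x ≤ f i} * (x - o) := mul_le_mul_of_nonneg_right hq.2 (by linarith)
    _ ≤ ∑ i, |f i - o| := card_mul_le_sum_abs_sub _ fun i hi =>
        le_abs.mpr (Or.inl (by linarith [(mem_filter.mp hi).2]))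

theorem IsQuantile.avgDist_le_avgDist_add (hq : IsQuantile α f x) {w : ℝ} (hwo : w ≤ o)
    (hxw : x - w ≤ o - x) : avgDist f w ≤ avgDist f o + (1 - α) * (o - w) := by
  have hpoint (i : ι) : |f i - w| ≤ |f i - o| + if f i ≤ x then 0 else o - w := by
    split_ifs with hi
    · rw [add_zero, abs_of_nonpos (a := f i - o) (by linarith)]
      exact abs_sub_le_iff.mpr ⟨by linarith, by linarith⟩
    · simpa only [abs_sub_comm w o, abs_of_nonneg (sub_nonneg.mpr hwo)] using abs_sub_le (f i) o w
  have hfar : (#{i | ¬ f i ≤ x} : ℝ) ≤ (1 - α) * Fintype.card ι := by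
    have hsplit := card_filter_add_card_filter_not (s := univ) (fun i => f i ≤ x)
    rw [card_univ] at hsplit
    have := hq.1
    rw [← hsplit, Nat.cast_add] at this ⊢
    linarith
  rw [avgDist, avgDist, div_add' _ _ _ (by positivity), div_le_div_iff_of_pos_right (by positivity)]
  calc ∑ i, |f i - w| ≤ ∑ i, |f i - o| + #{i | ¬ f i ≤ x} * (o - w) := by
        refine (sum_le_sum fun i _ => hpoint i).trans_eq ?_
        rw [sum_add_distrib, sum_ite, sum_const_zero, zero_add, sum_const, nsmul_eq_mul]
    _ ≤ ∑ i, |f i - o| + (1 - α) * Fintype.card ι * (o - w) := by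
        gcongr
    _ = ∑ i, |f i - o| + (1 - α) * (o - w) * Fintype.card ι := by ring

variable {c y : ℝ}

theorem sub_le_mul_avgDist_of_abs_sub_le (hq : IsQuantile α f x) (hy : |x - y| ≤ |x - o|)
    (hc : 0 ≤ c) (hc₁ : 2 ≤ c * (1 - α)) : y - o ≤ c * avgDist f o := by
  have hyx : y - x ≤ |x - o| := (abs_sub_comm x y ▸ le_abs_self (y - x)).trans hy
  rcases le_total x o with hxo | hox
  · rw [abs_of_nonpos (sub_nonpos.mpr hxo)] at hyx
    exact (by linarith : y - o ≤ 0).trans (mul_nonneg hc (avgDist_nonneg f o))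
  · rw [abs_of_nonneg (sub_nonneg.mpr hox)] at hyx
    calc y - o ≤ 2 * (x - o) := by linarith
      _ ≤ c * (1 - α) * (x - o) := mul_le_mul_of_nonneg_right hc₁ (by linarith)
      _ ≤ c * avgDist f o := by
        rw [mul_assoc]
        exact mul_le_mul_of_nonneg_left (hq.one_sub_mul_sub_le_avgDist hox) hc

theorem avgDist_le_of_abs_sub_le_of_lt (hq : IsQuantile α f x) (hy : |x - y| ≤ |x - o|) {w : ℝ}
    (hyw : y ≤ w) (hwo : w < o) (hα : α ≤ 1) (hc : 0 ≤ c)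
    (hc₂ : 2 * (1 - α) ≤ c * α) :
    avgDist f w ≤ (1 + c) * avgDist f o := by
  have hxy : x - y ≤ |x - o| := (le_abs_self _).trans hy
  have hxo : x ≤ o := by
    by_contra! h
    rw [abs_of_pos (sub_pos.mpr h)] at hxy
    linarith
  rw [abs_of_nonpos (sub_nonpos.mpr hxo)] at hxy
  calc avgDist f w ≤ avgDist f o + (1 - α) * (o - w) :=
        hq.avgDist_le_avgDist_add hwo.le (by linarith)
    _ ≤ avgDist f o + 2 * (1 - α) * (o - x) := by
        have : (1 - α) * (o - w) ≤ (1 - α) * (2 * (o - x)) :=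
          mul_le_mul_of_nonneg_left (by linarith) (by linarith)
        linarith
    _ ≤ avgDist f o + c * α * (o - x) := by gcongr
    _ ≤ avgDist f o + c * avgDist f o := by
        rw [mul_assoc]
        gcongr
        exact hq.mul_sub_le_avgDist hxo
    _ = (1 + c) * avgDist f o := by ring

end Quantile

theorem sup'_avgDist_sup'_le {κ : Type*} [Fintype κ] [Nonempty κ] {ι : κ → Type*}
    [∀ d, Fintype (ι d)] [∀ d, Nonempty (ι d)] (f : ∀ d, ι d → ℝ) {α c o : ℝ}
    {x y : κ → ℝ}
    (hc : 0 ≤ c) (hc₁ : 2 ≤ c * (1 - α)) (hc₂ : 2 * (1 - α) ≤ c * α)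
    (hq : ∀ d, IsQuantile α (f d) (x d)) (hy : ∀ d, |x d - y d| ≤ |x d - o|) :
    univ.sup' univ_nonempty (fun d => avgDist (f d) (univ.sup' univ_nonempty y)) ≤
      (1 + c) * univ.sup' univ_nonempty (fun d => avgDist (f d) o) := by
  set w := univ.sup' univ_nonempty y
  set opt := univ.sup' univ_nonempty fun d => avgDist (f d) o
  have hopt (d : κ) : avgDist (f d) o ≤ opt := le_sup' (fun d => avgDist (f d) o) (mem_univ d)
  refine sup'_le _ _ fun d _ => ?_
  rcases lt_or_ge w o with hwo | how
  · have hα : α ≤ 1 := by nlinarith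
    calc avgDist (f d) w ≤ (1 + c) * avgDist (f d) o :=
          avgDist_le_of_abs_sub_le_of_lt (hq d) (hy d) (le_sup' y (mem_univ d)) hwo hα hc hc₂
      _ ≤ (1 + c) * opt := by gcongr; exact hopt d
  · obtain ⟨D, -, hD⟩ := exists_mem_eq_sup' univ_nonempty y
    have hw : w - o ≤ c * opt := by
      rw [show w = y D from hD]
      exact (sub_le_mul_avgDist_of_abs_sub_le (hq D) (hy D) hc hc₁).trans
        (mul_le_mul_of_nonneg_left (hopt D) hc)
    calc avgDist (f d) w ≤ avgDist (f d) o + |w - o| := avgDist_le_add_abs_sub _ _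
      _ ≤ opt + c * opt := by rw [abs_of_nonneg (sub_nonneg.mpr how)]; linarith [hopt d]
      _ = (1 + c) * opt := by ring

theorem stmt_12 (k : ℕ) (A : Finset ℝ)
    (n : Fin (k + 1) → ℕ) (p : (d : Fin (k + 1)) → Fin (n d + 1) → ℝ)
    (α : ℝ) (hα : α = (3 - Real.sqrt 5) / 2)
    (x : Fin (k + 1) → ℝ)
    (hx : ∀ d, (Multiset.sort
        (Multiset.map (p d) (Finset.univ : Finset (Fin (n d + 1))).val) (· ≤ ·))[⌈α * (n d + 1 : ℕ)⌉₊ - 1]?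
      = some (x d))
    (y : Fin (k + 1) → ℝ)
    (hy : ∀ d, y d ∈ A ∧ ∀ a ∈ A, |x d - y d| ≤ |x d - a|)
    (w : ℝ) (hw : w = Finset.univ.sup' Finset.univ_nonempty y)
    (o : ℝ) (ho : o ∈ A) :
    Finset.univ.sup' Finset.univ_nonempty
        (fun d => (1 / (n d + 1 : ℕ) : ℝ) * ∑ i, |p d i - w|) ≤
      (2 + Real.sqrt 5) *
        Finset.univ.sup' Finset.univ_nonempty
          (fun d => (1 / (n d + 1 : ℕ) : ℝ) * ∑ i, |p d i - o|) := by
  have hs5 : √5 ^ 2 = 5 := Real.sq_sqrt (by norm_num)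
  have hs5' : √5 ≤ 3 := by nlinarith [Real.sqrt_nonneg 5]
  have hq (d : Fin (k + 1)) : IsQuantile α (p d) (x d) :=
    isQuantile_of_sort_getElem? (by rw [hα]; linarith) (by simpa using hx d)
  have havg (z : ℝ) : (fun d => (1 / (n d + 1 : ℕ) : ℝ) * ∑ i, |p d i - z|) =
      fun d => avgDist (p d) z := by
    funext d
    simp [avgDist, div_eq_inv_mul]
  rw [havg, havg, hw, show 2 + √5 = 1 + (1 + √5) by ring]
  exact sup'_avgDist_sup'_le p (by positivity) (by rw [hα]; nlinarith) (by rw [hα]; nlinarith)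
    hq fun d => (hy d).2 o ho
end

section
/- For every α ∈ (0,1) and every instance, the Rightmost-of-α-Leftmost mechanism satisfies, in the case where the winner w and an optimal alternative o satisfy w < o: max-of-average cost of w is at most (2/α - 1) times the max-of-average cost of o. -/
/-!
Let `d` be a district attaining the maximal average cost of `w`, `x` its `⌈α n⌉`-th leftmost
agent and `y ≤ w` its representative. Since `y` is the alternative nearest to `x` and `o` is an
alternative to the right of `y`, `x` lies weakly left of the midpoint of `w` and `o`; so at least
`α n` agents of `d` are weakly closer to `w` than to `o`, each at distance at least `(o - w) / 2`
from `o`. Every other agent pays at most `o - w` more at `w` than at `o`, whence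
`∑ |i - w| ≤ ∑ |i - o| + (1 - α) n (o - w) ≤ (2 / α - 1) ∑ |i - o|` in `d`.
-/

open Finset

theorem Multiset.succ_le_countP_le_of_sort_getElem? {α : Type*} [LinearOrder α]
    (s : Multiset α) {j : ℕ} {a : α} (h : (s.sort (· ≤ ·))[j]? = some a) :
    j + 1 ≤ s.countP (· ≤ a) := by
  obtain ⟨hj, rfl⟩ := List.getElem?_eq_some_iff.mp h
  set l := s.sort (· ≤ ·)
  have hsorted : l.SortedLE := (s.pairwise_sort _).sortedLE
  have hprefix : ∀ b ∈ l.take (j + 1), b ≤ l[j] := by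
    intro b hb
    obtain ⟨i, hi, rfl⟩ := List.mem_iff_getElem.mp hb
    rw [List.getElem_take]
    exact hsorted.getElem_le_getElem_of_le (by simp at hi; omega)
  calc j + 1 = (l.take (j + 1)).countP (· ≤ l[j]) := by
        rw [List.countP_eq_length.mpr (by simpa using hprefix), List.length_take]; omega
    _ ≤ l.countP (· ≤ l[j]) := (List.take_sublist _ _).countP_le
    _ = s.countP (· ≤ l[j]) := by rw [← Multiset.coe_countP, Multiset.sort_eq]

theorem succ_le_card_filter_le_of_sort_getElem? {ι α : Type*} [Fintype ι] [LinearOrder α]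
    (f : ι → α) {j : ℕ} {a : α}
    (h : (Multiset.sort (Multiset.map f (univ : Finset ι).val) (· ≤ ·))[j]? = some a) :
    j + 1 ≤ #{i | f i ≤ a} := by
  have := (Multiset.map f univ.val).succ_le_countP_le_of_sort_getElem? h
  rwa [Multiset.countP_map] at this

theorem le_midpoint_of_abs_sub_le {x y w o : ℝ} (hyw : y ≤ w) (hwo : w < o)
    (h : |x - y| ≤ |x - o|) : x ≤ (w + o) / 2 := by
  rcases abs_cases (x - y) with ⟨_, _⟩ | ⟨_, _⟩ <;>
    rcases abs_cases (x - o) with ⟨_, _⟩ | ⟨_, _⟩ <;> linarith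

theorem sum_abs_sub_le_of_card_le_midpoint {ι : Type*} [Fintype ι] (f : ι → ℝ) {w o α : ℝ}
    (hwo : w ≤ o) (hα0 : 0 < α) (hα1 : α ≤ 1)
    (hcard : α * Fintype.card ι ≤ #{i | f i ≤ (w + o) / 2}) :
    ∑ i, |f i - w| ≤ (2 / α - 1) * ∑ i, |f i - o| := by
  set S : Finset ι := {i | f i ≤ (w + o) / 2}
  set T : Finset ι := {i | ¬ f i ≤ (w + o) / 2}
  have hnear : ∀ i ∈ S, |f i - w| ≤ |f i - o| ∧ (o - w) / 2 ≤ |f i - o| := by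
    intro i hi
    have : f i ≤ (w + o) / 2 := (mem_filter.mp hi).2
    constructor <;> rcases abs_cases (f i - w) with ⟨_, _⟩ | ⟨_, _⟩ <;>
      rcases abs_cases (f i - o) with ⟨_, _⟩ | ⟨_, _⟩ <;> linarith
  have hfar : ∀ i, |f i - w| ≤ |f i - o| + (o - w) := fun i => by
    simpa [abs_of_nonneg (sub_nonneg.2 hwo)] using abs_sub_le (f i) o w
  have hcost_w : ∑ i, |f i - w| ≤ ∑ i, |f i - o| + #T * (o - w) := by
    have hS : ∑ i ∈ S, |f i - w| ≤ ∑ i ∈ S, |f i - o| := sum_le_sum fun i hi => (hnear i hi).1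
    have hT : ∑ i ∈ T, |f i - w| ≤ ∑ i ∈ T, (|f i - o| + (o - w)) := sum_le_sum fun i _ => hfar i
    rw [sum_add_distrib, sum_const, nsmul_eq_mul] at hT
    rw [← sum_filter_add_sum_filter_not univ (fun i => f i ≤ (w + o) / 2),
      ← sum_filter_add_sum_filter_not univ (fun i => f i ≤ (w + o) / 2) (fun i => |f i - o|)]
    linarith
  have hcost_o : #S * ((o - w) / 2) ≤ ∑ i, |f i - o| :=
    calc #S * ((o - w) / 2) ≤ ∑ i ∈ S, |f i - o| := by
          simpa using card_nsmul_le_sum _ _ _ fun i hi => (hnear i hi).2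
      _ ≤ ∑ i, |f i - o| := sum_le_sum_of_subset_of_nonneg (subset_univ S) fun _ _ _ => abs_nonneg _
  have hST : (#S : ℝ) + #T = Fintype.card ι := by
    exact_mod_cast card_filter_add_card_filter_not (s := univ) _
  have hinv : 1 ≤ 1 / α := by rw [le_div_iff₀ hα0]; linarith
  have hm : (Fintype.card ι : ℝ) ≤ #S * (1 / α) := by
    rw [mul_one_div, le_div_iff₀ hα0]; linarith
  rw [show 2 / α = 2 * (1 / α) by ring]
  nlinarith [mul_le_mul_of_nonneg_left hcost_o (sub_nonneg.2 hinv),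
    mul_le_mul_of_nonneg_right hm (sub_nonneg.2 hwo)]

theorem stmt_14 (k : ℕ) (A : Finset ℝ)
    (n : Fin (k + 1) → ℕ) (p : (d : Fin (k + 1)) → Fin (n d + 1) → ℝ)
    (α : ℝ) (h0 : 0 < α) (h1 : α < 1)
    (x : Fin (k + 1) → ℝ)
    (hx : ∀ d, (Multiset.sort
        (Multiset.map (p d) (Finset.univ : Finset (Fin (n d + 1))).val) (· ≤ ·))[⌈α * (n d + 1 : ℕ)⌉₊ - 1]?
      = some (x d))
    (y : Fin (k + 1) → ℝ)
    (hy : ∀ d, y d ∈ A ∧ ∀ a ∈ A, |x d - y d| ≤ |x d - a|)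
    (w : ℝ) (hw : w = Finset.univ.sup' Finset.univ_nonempty y)
    (o : ℝ) (ho : o ∈ A) (hwo : w < o) :
    Finset.univ.sup' Finset.univ_nonempty
        (fun d => (1 / (n d + 1 : ℕ) : ℝ) * ∑ i, |p d i - w|) ≤
      (2 / α - 1) *
        Finset.univ.sup' Finset.univ_nonempty
          (fun d => (1 / (n d + 1 : ℕ) : ℝ) * ∑ i, |p d i - o|) := by
  obtain ⟨d, -, hd⟩ := exists_mem_eq_sup' univ_nonempty
    (fun d => (1 / (n d + 1 : ℕ) : ℝ) * ∑ i, |p d i - w|)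
  rw [hd]
  have hxd : x d ≤ (w + o) / 2 :=
    le_midpoint_of_abs_sub_le (hw ▸ le_sup' y (mem_univ d)) hwo ((hy d).2 o ho)
  have hK : 1 ≤ ⌈α * (n d + 1 : ℕ)⌉₊ := Nat.one_le_ceil_iff.2 (by positivity)
  have hcount := succ_le_card_filter_le_of_sort_getElem? (p d) (hx d)
  have hcard : α * Fintype.card (Fin (n d + 1)) ≤ #{i | p d i ≤ (w + o) / 2} :=
    calc α * Fintype.card (Fin (n d + 1)) ≤ ⌈α * (n d + 1 : ℕ)⌉₊ := by
          simpa using Nat.le_ceil (α * (n d + 1 : ℕ))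
      _ ≤ #{i | p d i ≤ x d} := by exact_mod_cast (by omega)
      _ ≤ #{i | p d i ≤ (w + o) / 2} := by
          exact_mod_cast card_le_card (monotone_filter_right _ fun _ _ h => le_trans h hxd)
  have hα : 0 ≤ 2 / α - 1 := by
    rw [sub_nonneg, le_div_iff₀ h0]; linarith
  calc (1 / (n d + 1 : ℕ) : ℝ) * ∑ i, |p d i - w|
      ≤ (1 / (n d + 1 : ℕ) : ℝ) * ((2 / α - 1) * ∑ i, |p d i - o|) := by
        gcongr
        exact sum_abs_sub_le_of_card_le_midpoint (p d) hwo.le h0 h1.le hcard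
    _ = (2 / α - 1) * ((1 / (n d + 1 : ℕ) : ℝ) * ∑ i, |p d i - o|) := by ring
    _ ≤ _ := by
        gcongr
        exact le_sup' (fun d => (1 / (n d + 1 : ℕ) : ℝ) * ∑ i, |p d i - o|) (mem_univ d)
end
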